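/- The set of realizable vectors is closed under nonnegative scaling and addition (is a convex cone): if π is realized by a graph G with terminal set T and π' is realized by G' with the same terminal set T, then for all reals a, b > 0, the vector aπ + bπ' is realizable (by scaling the capacities of G by a and of G' by b and gluing the two graphs at the terminals). -/

import Mathlib

/-!
Glue the two graphs along their terminals, scaling the capacities by `a` and `b`. The capacity
of a vertex set of the glued graph is `a` times the capacity of its trace on the first graph plus
`b` times that of its trace on the second. Every terminal cut of the glued graph therefore costs at
least `a π S + b π' S`, and gluing a minimum cut of each graph, which agree on the terminals,
gives a terminal cut of exactly that cost.
-/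

open Finset
open scoped Classical

noncomputable def crossCap {V : Type*} [Fintype V] (c : V → V → ℝ) (A : Finset V) : ℝ :=
  ∑ u ∈ A, ∑ v ∈ Aᶜ, c u v

noncomputable def cutVal {V : Type*} [Fintype V] (c : V → V → ℝ) (T S : Finset V) : ℝ :=
  Finset.inf' (Finset.univ.filter fun A : Finset V => S ⊆ A ∧ Disjoint (T \ S) A)
    ⟨S, by simp [Finset.sdiff_disjoint]⟩ (fun A => crossCap c A)

/-- A vector `π`, indexed by the proper nonempty subsets of the terminal set `T`,
is realizable if there is an edge-capacitated graph containing `T` whose terminal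
min-cut values are given by `π`. -/
def Realizable {T : Type} [Fintype T] (π : Finset T → ℝ) : Prop :=
  ∃ (V : Type) (_ : Fintype V) (ι : T ↪ V) (c : V → V → ℝ),
    (∀ u v, 0 ≤ c u v) ∧ (∀ u v, c u v = c v u) ∧
    ∀ S : Finset T, S.Nonempty → S ≠ Finset.univ →
      π S = cutVal c (Finset.univ.map ι) (S.map ι)

section Cuts

theorem map_subset_and_disjoint_iff {T V : Type*} [Fintype T] (ι : T ↪ V) (S : Finset T)
    (A : Finset V) :
    (S.map ι ⊆ A ∧ Disjoint (univ.map ι \ S.map ι) A) ↔ ∀ t, ι t ∈ A ↔ t ∈ S := by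
  simp only [subset_iff, disjoint_left, mem_sdiff, mem_map, mem_univ, true_and]
  constructor
  · rintro ⟨hS, hT⟩ t
    refine ⟨fun htA => ?_, fun ht => hS ⟨t, ht, rfl⟩⟩
    by_contra ht
    exact hT ⟨⟨t, rfl⟩, fun ⟨s, hs, hst⟩ => ht (ι.injective hst ▸ hs)⟩ htA
  · intro h
    refine ⟨?_, ?_⟩
    · rintro _ ⟨t, ht, rfl⟩
      exact (h t).2 ht
    · rintro _ ⟨⟨t, rfl⟩, htS⟩ htA
      exact htS ⟨t, (h t).1 htA, rfl⟩

variable {T V : Type*} [Fintype T] [Fintype V]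

theorem crossCap_add (c c' : V → V → ℝ) (A : Finset V) :
    crossCap (c + c') A = crossCap c A + crossCap c' A := by
  simp only [crossCap, Pi.add_apply, sum_add_distrib]

theorem crossCap_smul (r : ℝ) (c : V → V → ℝ) (A : Finset V) :
    crossCap (r • c) A = r * crossCap c A := by
  simp only [crossCap, Pi.smul_apply, smul_eq_mul, mul_sum]

theorem cutVal_le_crossCap (c : V → V → ℝ) (ι : T ↪ V) (S : Finset T) {A : Finset V}
    (hA : ∀ t, ι t ∈ A ↔ t ∈ S) :
    cutVal c (univ.map ι) (S.map ι) ≤ crossCap c A :=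
  inf'_le _ (mem_filter.2 ⟨mem_univ A, (map_subset_and_disjoint_iff ι S A).2 hA⟩)

theorem exists_crossCap_eq_cutVal (c : V → V → ℝ) (ι : T ↪ V) (S : Finset T) :
    ∃ A : Finset V, (∀ t, ι t ∈ A ↔ t ∈ S) ∧ crossCap c A = cutVal c (univ.map ι) (S.map ι) := by
  obtain ⟨A, hA, hcut⟩ := exists_mem_eq_inf' (s := univ.filter fun A : Finset V =>
      S.map ι ⊆ A ∧ Disjoint (univ.map ι \ S.map ι) A) ⟨S.map ι, by simp [sdiff_disjoint]⟩
    (crossCap c)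
  exact ⟨A, (map_subset_and_disjoint_iff ι S A).1 (mem_filter.1 hA).2, hcut.symm⟩

end Cuts

section Pushforward

variable {V W : Type*} [Fintype V]

noncomputable def pushCap (f : V → W) (c : V → V → ℝ) : W → W → ℝ :=
  fun x y => ∑ u with f u = x, ∑ v with f v = y, c u v

theorem pushCap_nonneg (f : V → W) {c : V → V → ℝ} (hc : ∀ u v, 0 ≤ c u v) (x y : W) :
    0 ≤ pushCap f c x y :=
  sum_nonneg fun u _ => sum_nonneg fun v _ => hc u v

theorem pushCap_comm (f : V → W) {c : V → V → ℝ} (hc : ∀ u v, c u v = c v u) (x y : W) :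
    pushCap f c x y = pushCap f c y x := by
  rw [pushCap, pushCap, sum_comm]
  simp only [hc]

theorem crossCap_pushCap [Fintype W] (f : V → W) (c : V → V → ℝ) (A : Finset W) :
    crossCap (pushCap f c) A = crossCap c {u | f u ∈ A} := by
  have hcompl : ({v | f v ∈ Aᶜ} : Finset V) = ({u | f u ∈ A} : Finset V)ᶜ := by ext; simp
  simp only [crossCap, pushCap]
  rw [← sum_fiberwise_eq_sum_filter, ← hcompl]
  refine sum_congr rfl fun x _ => ?_
  rw [sum_comm]
  exact sum_congr rfl fun u _ => sum_fiberwise_eq_sum_filter _ _ _ _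

end Pushforward

section Gluing

variable {T V V' W : Type*} [Fintype T] [Fintype V] [Fintype V'] [Fintype W]
  {ι : T ↪ V} {ι' : T ↪ V'} {κ : T ↪ W} {f : V → W} {g : V' → W}

/-- A cut of `W` restricts to cuts of `V` and `V'`, and by `hglue` two optimal cuts of `V` and
`V'` come from a single cut of `W`. -/
theorem cutVal_smul_pushCap_add (c : V → V → ℝ) (c' : V' → V' → ℝ) {a b : ℝ} (ha : 0 ≤ a)
    (hb : 0 ≤ b) (hf : ∀ t, f (ι t) = κ t) (hg : ∀ t, g (ι' t) = κ t)
    (hglue : ∀ (B : Finset V) (B' : Finset V'), (∀ t, ι t ∈ B ↔ ι' t ∈ B') →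
      ∃ A : Finset W, (∀ v, f v ∈ A ↔ v ∈ B) ∧ ∀ v, g v ∈ A ↔ v ∈ B')
    (S : Finset T) :
    cutVal (a • pushCap f c + b • pushCap g c') (univ.map κ) (S.map κ) =
      a * cutVal c (univ.map ι) (S.map ι) + b * cutVal c' (univ.map ι') (S.map ι') := by
  have hcross : ∀ A, crossCap (a • pushCap f c + b • pushCap g c') A =
      a * crossCap c {v | f v ∈ A} + b * crossCap c' {v | g v ∈ A} := fun A => by
    rw [crossCap_add, crossCap_smul, crossCap_smul, crossCap_pushCap, crossCap_pushCap]
  apply le_antisymm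
  · obtain ⟨B, hB, hcutB⟩ := exists_crossCap_eq_cutVal c ι S
    obtain ⟨B', hB', hcutB'⟩ := exists_crossCap_eq_cutVal c' ι' S
    obtain ⟨A, hAB, hAB'⟩ := hglue B B' fun t => (hB t).trans (hB' t).symm
    have hBA : ({v | f v ∈ A} : Finset V) = B := by ext; simp [hAB]
    have hB'A : ({v | g v ∈ A} : Finset V') = B' := by ext; simp [hAB']
    calc _ ≤ crossCap (a • pushCap f c + b • pushCap g c') A :=
          cutVal_le_crossCap _ κ S fun t => by rw [← hf, hAB, hB]
      _ = _ := by rw [hcross, hBA, hB'A, hcutB, hcutB']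
  · obtain ⟨A, hA, hcutA⟩ := exists_crossCap_eq_cutVal (a • pushCap f c + b • pushCap g c') κ S
    rw [← hcutA, hcross]
    gcongr
    · exact cutVal_le_crossCap c ι S fun t => by simp [hf, hA]
    · exact cutVal_le_crossCap c' ι' S fun t => by simp [hg, hA]

end Gluing

open Function in
theorem exists_finset_sum_extend_mem_iff {T V V' : Type*} [Fintype T] [Fintype V]
    [Fintype V'] (ι : T ↪ V) (ι' : T ↪ V') (B : Finset V) (B' : Finset V')
    (hBB' : ∀ t, ι t ∈ B ↔ ι' t ∈ B') :
    ∃ A : Finset (T ⊕ V ⊕ V'), (∀ v, extend ι Sum.inl (Sum.inr ∘ Sum.inl) v ∈ A ↔ v ∈ B) ∧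
      ∀ v, extend ι' Sum.inl (Sum.inr ∘ Sum.inr) v ∈ A ↔ v ∈ B' := by
  refine ⟨univ.filter (Sum.elim (ι · ∈ B) (Sum.elim (· ∈ B) (· ∈ B'))), fun v => ?_, fun v => ?_⟩
  · by_cases hv : ∃ t, ι t = v
    · obtain ⟨t, rfl⟩ := hv
      simp [ι.injective.extend_apply]
    · simp [extend_apply' _ _ _ hv]
  · by_cases hv : ∃ t, ι' t = v
    · obtain ⟨t, rfl⟩ := hv
      simp [ι'.injective.extend_apply, hBB']
    · simp [extend_apply' _ _ _ hv]

/-- The set of realizable vectors is a convex cone. -/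
theorem realizable_convex_cone {T : Type} [Fintype T] (π π' : Finset T → ℝ)
    (h : Realizable π) (h' : Realizable π') (a b : ℝ) (ha : 0 < a) (hb : 0 < b) :
    Realizable (fun S => a * π S + b * π' S) := by
  obtain ⟨V, _, ι, c, hc, hcc, hπ⟩ := h
  obtain ⟨V', _, ι', c', hc', hcc', hπ'⟩ := h'
  -- the unused vertices `inr (inl (ι t))` and `inr (inr (ι' t))` stay isolated
  let f : V → T ⊕ V ⊕ V' := Function.extend ι Sum.inl (Sum.inr ∘ Sum.inl)
  let g : V' → T ⊕ V ⊕ V' := Function.extend ι' Sum.inl (Sum.inr ∘ Sum.inr)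
  refine ⟨T ⊕ V ⊕ V', inferInstance, .inl, a • pushCap f c + b • pushCap g c',
    fun x y => ?_, fun x y => ?_, fun S hS hST => ?_⟩
  · exact add_nonneg (mul_nonneg ha.le (pushCap_nonneg f hc x y))
      (mul_nonneg hb.le (pushCap_nonneg g hc' x y))
  · simp only [Pi.add_apply, Pi.smul_apply, pushCap_comm f hcc x y, pushCap_comm g hcc' x y]
  · dsimp only
    rw [hπ S hS hST, hπ' S hS hST]
    exact (cutVal_smul_pushCap_add (κ := .inl) (f := f) (g := g) c c' ha.le hb.le
      (ι.injective.extend_apply _ _) (ι'.injective.extend_apply _ _) (exists_finset_sum_extend_mem_iff ι ι') S).symm
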